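/- There exists a finite simple graph that is bipartite, 2-inductive, has maximum degree at most 3 and girth 6, and is not 5-D2-edge-colorable, i.e., it admits no distance-2 edge coloring with 5 colors. -/

import Mathlib

open SimpleGraph

/-- Two edges `e` and `f` of a simple graph `G` are within distance 2 of each other:
they are distinct edges of `G` and either they are adjacent (share an endpoint) or
there is some other edge of `G` adjacent to both of them. -/
def WithinDist2 {V : Type*} (G : SimpleGraph V) (e f : Sym2 V) : Prop :=
  e ∈ G.edgeSet ∧ f ∈ G.edgeSet ∧ e ≠ f ∧
    ((∃ v, v ∈ e ∧ v ∈ f) ∨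
      ∃ g ∈ G.edgeSet, g ≠ e ∧ g ≠ f ∧ (∃ v, v ∈ e ∧ v ∈ g) ∧ (∃ v, v ∈ g ∧ v ∈ f))

/-- A distance-2 edge coloring (strong edge coloring) of `G` with `k` colors:
any two distinct edges within distance 2 of each other receive distinct colors. -/
def IsD2EdgeColoring {V : Type*} (G : SimpleGraph V) (k : ℕ) (c : Sym2 V → Fin k) : Prop :=
  ∀ e f : Sym2 V, WithinDist2 G e f → c e ≠ c f

/-- A graph `G` is `c`-inductive if its vertices can be numbered (linearly ordered)
so that each vertex has at most `c` neighbors with higher numbers. -/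
def IsInductive {V : Type*} (G : SimpleGraph V) (c : ℕ) : Prop :=
  ∃ f : V → ℕ, Function.Injective f ∧ ∀ v : V, {w : V | G.Adj v w ∧ f v < f w}.ncard ≤ c

/-!
The example is the Heawood graph with the edge `01` deleted. Its vertices `0, …, 13` are joined
only across parities, so it is bipartite; no two vertices have two common neighbours, so it has
no 4-cycle and its girth is 6. The sixteen edges avoiding the vertices `0` and `1` conflict with
each other exactly as in the Heawood graph, where no four edges are pairwise at distance at
least 3. A colour class of a distance-2 edge colouring consists of pairwise far edges, so five
colours cover at most 15 of these sixteen edges.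
-/

open SimpleGraph Finset

section DistanceTwo

variable {V : Type*} {G : SimpleGraph V}

theorem withinDist2_of_mem {e f : Sym2 V} (he : e ∈ G.edgeSet) (hf : f ∈ G.edgeSet) (hne : e ≠ f)
    {u v : V} (hu : u ∈ e) (hv : v ∈ f) (huv : u = v ∨ G.Adj u v) : WithinDist2 G e f := by
  refine ⟨he, hf, hne, ?_⟩
  rcases huv with rfl | huv
  · exact .inl ⟨u, hu, hv⟩
  by_cases hve : v ∈ e
  · exact .inl ⟨v, hve, hv⟩
  by_cases huf : u ∈ f
  · exact .inl ⟨u, hu, huf⟩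
  exact .inr ⟨s(u, v), huv, fun h => hve (h ▸ Sym2.mem_mk_right u v),
    fun h => huf (h ▸ Sym2.mem_mk_left u v), ⟨u, hu, Sym2.mem_mk_left u v⟩,
    ⟨v, Sym2.mem_mk_right u v, hv⟩⟩

def Touch (G : SimpleGraph V) (p q : V × V) : Prop :=
  ∃ u ∈ [p.1, p.2], ∃ v ∈ [q.1, q.2], u = v ∨ G.Adj u v

instance [DecidableEq V] [DecidableRel G.Adj] : DecidableRel (Touch G) := fun p q =>
  inferInstanceAs (Decidable (∃ u ∈ [p.1, p.2], ∃ v ∈ [q.1, q.2], u = v ∨ G.Adj u v))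

theorem withinDist2_of_touch {p q : V × V} (hp : G.Adj p.1 p.2) (hq : G.Adj q.1 q.2)
    (hne : s(p.1, p.2) ≠ s(q.1, q.2)) (h : Touch G p q) :
    WithinDist2 G s(p.1, p.2) s(q.1, q.2) := by
  obtain ⟨u, hu, v, hv, huv⟩ := h
  have mem_mk {x : V} {r : V × V} (hx : x ∈ [r.1, r.2]) : x ∈ s(r.1, r.2) := by
    simpa [Sym2.mem_iff] using hx
  exact withinDist2_of_mem hp hq hne (mem_mk hu) (mem_mk hv) huv

theorem not_exists_isD2EdgeColoring {ι : Type*} [Fintype ι] (e : ι → Sym2 V) {k m : ℕ}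
    (hcard : k * m < Fintype.card ι)
    (hfar : ∀ t : Finset ι, (t : Set ι).Pairwise (fun i j => ¬ WithinDist2 G (e i) (e j)) →
      #t ≤ m) :
    ¬ ∃ c : Sym2 V → Fin k, IsD2EdgeColoring G k c := by
  rintro ⟨c, hc⟩
  obtain ⟨y, hy⟩ := Fintype.exists_lt_card_fiber_of_mul_lt_card (fun i => c (e i))
    (by simpa using hcard)
  refine (hfar _ fun i hi j hj _ hij => hc _ _ hij ?_).not_gt hy
  simp only [coe_filter, mem_univ, true_and, Set.mem_ofPred_eq] at hi hj
  rw [hi, hj]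

end DistanceTwo

theorem Finset.exists_four_of_three_lt_card {α : Type*} {s : Finset α} (h : 3 < #s) :
    ∃ a ∈ s, ∃ b ∈ s, ∃ c ∈ s, ∃ d ∈ s, a ≠ b ∧ a ≠ c ∧ a ≠ d ∧ b ≠ c ∧ b ≠ d ∧ c ≠ d := by
  classical
  obtain ⟨a, ha, b, hb, c, hc, hab, hac, hbc⟩ := two_lt_card.mp (by omega : 2 < #s)
  obtain ⟨d, hd, hdabc⟩ := exists_mem_notMem_of_card_lt_card (s := {a, b, c})
    (card_le_three.trans_lt h)
  simp only [mem_insert, mem_singleton, not_or] at hdabc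
  exact ⟨a, ha, b, hb, c, hc, d, hd, hab, hac, Ne.symm hdabc.1, hbc, Ne.symm hdabc.2.1,
    Ne.symm hdabc.2.2⟩

section Girth

variable {V : Type*} {G : SimpleGraph V}

theorem SimpleGraph.Walk.IsCycle.length_ne_four
    (hC4 : ∀ a b, G.Adj a b → ∀ c, G.Adj b c → ∀ d, G.Adj c d → G.Adj d a → a = c ∨ b = d)
    {u : V} {w : G.Walk u u} (hw : w.IsCycle) : w.length ≠ 4 := by
  intro h4
  have adj (i : ℕ) (hi : i < 4) : G.Adj (w.getVert i) (w.getVert (i + 1)) :=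
    w.adj_getVert_succ (h4 ▸ hi)
  have hclose : w.getVert 4 = w.getVert 0 := by
    rw [← h4, Walk.getVert_length, Walk.getVert_zero]
  rcases hC4 _ _ (adj 0 (by norm_num)) _ (adj 1 (by norm_num)) _ (adj 2 (by norm_num))
    (hclose ▸ adj 3 (by norm_num)) with h | h
  · exact hw.getVert_sub_one_ne_getVert_add_one (i := 1) (by omega) h
  · exact hw.getVert_sub_one_ne_getVert_add_one (i := 2) (by omega) h

theorem six_le_egirth (h2 : G.Colorable 2)
    (hC4 : ∀ a b, G.Adj a b → ∀ c, G.Adj b c → ∀ d, G.Adj c d → G.Adj d a → a = c ∨ b = d) :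
    6 ≤ G.egirth := by
  rw [le_egirth]
  intro u w hw
  obtain ⟨r, hr⟩ := two_colorable_iff_forall_loop_even.mp h2 u w
  have h3 := hw.three_le_length
  have h4 := hw.length_ne_four hC4
  exact_mod_cast (by omega : 6 ≤ w.length)

end Girth

/-- The Heawood graph in LCF notation `[5, -5]^7`: a Hamiltonian cycle `0, 1, …, 13` with chords
from each even vertex `a` to `a + 5`. -/
def heawood : SimpleGraph (Fin 14) :=
  SimpleGraph.fromRel fun a b => b = a + 1 ∨ Even a.val ∧ b = a + 5

def heawoodMinusEdge : SimpleGraph (Fin 14) := heawood.deleteEdges {s(0, 1)}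

instance : DecidableRel heawood.Adj := fun a b =>
  inferInstanceAs (Decidable ((SimpleGraph.fromRel _).Adj a b))

instance : DecidableRel heawoodMinusEdge.Adj := fun a b =>
  inferInstanceAs (Decidable ((heawood.deleteEdges {s(0, 1)}).Adj a b))

namespace heawoodMinusEdge

theorem colorable_two : heawoodMinusEdge.Colorable 2 :=
  ⟨Coloring.mk (fun v => Fin.ofNat 2 v.val) (by decide)⟩

theorem isInductive : IsInductive heawoodMinusEdge 2 := by
  refine ⟨Fin.val, Fin.val_injective, fun v => ?_⟩
  rw [Set.ncard_eq_toFinset_card']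
  revert v
  decide

theorem ncard_neighborSet_le (v : Fin 14) : (heawoodMinusEdge.neighborSet v).ncard ≤ 3 := by
  rw [Set.ncard_eq_toFinset_card']
  revert v
  decide

theorem no_four_cycle : ∀ a b, heawoodMinusEdge.Adj a b → ∀ c, heawoodMinusEdge.Adj b c →
    ∀ d, heawoodMinusEdge.Adj c d → heawoodMinusEdge.Adj d a → a = c ∨ b = d := by
  decide

def hexagon : heawoodMinusEdge.Walk 2 2 :=
  .cons (by decide : heawoodMinusEdge.Adj 2 3) <| .cons (by decide : heawoodMinusEdge.Adj 3 4) <|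
  .cons (by decide : heawoodMinusEdge.Adj 4 5) <| .cons (by decide : heawoodMinusEdge.Adj 5 6) <|
  .cons (by decide : heawoodMinusEdge.Adj 6 7) <| .cons (by decide : heawoodMinusEdge.Adj 7 2) .nil

theorem hexagon_isCycle : hexagon.IsCycle := by
  simp only [hexagon, Walk.cons_isCycle_iff, Walk.isPath_def]
  decide

theorem egirth_eq : heawoodMinusEdge.egirth = 6 :=
  le_antisymm (egirth_le_length hexagon_isCycle) (six_le_egirth colorable_two no_four_cycle)

/-- The edges avoiding the vertices `0` and `1`. -/
def farEnds : Fin 16 → Fin 14 × Fin 14 :=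
  ![(2, 3), (2, 7), (3, 4), (3, 12), (4, 5), (4, 9), (5, 6), (6, 7), (6, 11), (7, 8), (8, 9),
    (8, 13), (9, 10), (10, 11), (11, 12), (12, 13)]

def farEdge (i : Fin 16) : Sym2 (Fin 14) := s((farEnds i).1, (farEnds i).2)

theorem farEnds_adj : ∀ i, heawoodMinusEdge.Adj (farEnds i).1 (farEnds i).2 := by decide

theorem farEdge_injective : Function.Injective farEdge := by decide

-- The quantifiers are interleaved with the hypotheses so that `decide` prunes the search.
set_option synthInstance.maxSize 1000 in
theorem not_four_pairwise_far : ∀ i j, ¬ Touch heawoodMinusEdge (farEnds i) (farEnds j) →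
    ∀ k, ¬ Touch heawoodMinusEdge (farEnds i) (farEnds k) →
      ¬ Touch heawoodMinusEdge (farEnds j) (farEnds k) →
    ∀ l, ¬ Touch heawoodMinusEdge (farEnds i) (farEnds l) →
      ¬ Touch heawoodMinusEdge (farEnds j) (farEnds l) →
      ¬ Touch heawoodMinusEdge (farEnds k) (farEnds l) → False := by
  decide

theorem card_le_three_of_pairwise_far (t : Finset (Fin 16))
    (ht : (t : Set (Fin 16)).Pairwise
      fun i j => ¬ WithinDist2 heawoodMinusEdge (farEdge i) (farEdge j)) :
    #t ≤ 3 := by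
  have far {i j} (hi : i ∈ t) (hj : j ∈ t) (hij : i ≠ j) :
      ¬ Touch heawoodMinusEdge (farEnds i) (farEnds j) := fun h =>
    ht hi hj hij <| withinDist2_of_touch (farEnds_adj i) (farEnds_adj j)
      (farEdge_injective.ne hij) h
  by_contra! h
  obtain ⟨a, ha, b, hb, c, hc, d, hd, hab, hac, had, hbc, hbd, hcd⟩ :=
    exists_four_of_three_lt_card h
  exact not_four_pairwise_far a b (far ha hb hab) c (far ha hc hac) (far hb hc hbc) d
    (far ha hd had) (far hb hd hbd) (far hc hd hcd)

theorem not_exists_d2EdgeColoring_five :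
    ¬ ∃ c : Sym2 (Fin 14) → Fin 5, IsD2EdgeColoring heawoodMinusEdge 5 c :=
  not_exists_isD2EdgeColoring farEdge (m := 3) (by decide) card_le_three_of_pairwise_far

end heawoodMinusEdge

/-- There is a finite simple bipartite 2-inductive graph with maximum degree at most 3 and
girth 6 that admits no distance-2 edge coloring with 5 colors. -/
theorem exists_non_5_d2_colorable :
    ∃ (V : Type) (_ : Fintype V) (G : SimpleGraph V),
      G.Colorable 2 ∧
      IsInductive G 2 ∧
      (∀ v : V, (G.neighborSet v).ncard ≤ 3) ∧
      G.egirth = 6 ∧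
      ¬ ∃ c : Sym2 V → Fin 5, IsD2EdgeColoring G 5 c :=
  ⟨Fin 14, inferInstance, heawoodMinusEdge, heawoodMinusEdge.colorable_two,
    heawoodMinusEdge.isInductive, heawoodMinusEdge.ncard_neighborSet_le,
    heawoodMinusEdge.egirth_eq, heawoodMinusEdge.not_exists_d2EdgeColoring_five⟩
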